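/- Let n ≥ 2 be even, let r > 0, z = √(1 + r²), and Ω ∈ ℝ. The curves q_i(t) = (r cos(Ωt + 2π(i−1)/n), r sin(Ωt + 2π(i−1)/n), z), i = 1,…,n, form a solution of the curved n-body equations on H² if and only if Ω² = 2 Σ_{j=1}^{n/2 − 1} (1 − cos(2jπ/n)) / ((r² cos(2jπ/n) − 1 − r²)² − 1)^{3/2} + 1/(4 r³ (1 + r²)^{3/2}). -/

import Mathlib

open Real

noncomputable section

/-- Lorentz inner product on `ℝ^{2,1} = ℝ × ℝ × ℝ`: `a⊙b = a₁b₁ + a₂b₂ − a₃b₃`. -/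
def ldot3 (a b : ℝ × ℝ × ℝ) : ℝ := a.1 * b.1 + a.2.1 * b.2.1 - a.2.2 * b.2.2

/-- The curved `n`-body problem on the hyperbolic plane `H²`, realized as the upper sheet
`{x² + y² − z² = −1, z > 0}` of the hyperboloid in `ℝ³` with the Lorentz product
(curvature `−1`), equal masses `mᵢ = 1`:  the curves stay on the upper sheet and satisfy
`q̈ᵢ = Σ_{j≠i} (qⱼ + (qᵢ⊙qⱼ) qᵢ)/((qᵢ⊙qⱼ)² − 1)^{3/2} + (q̇ᵢ⊙q̇ᵢ) qᵢ`. -/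
def IsHyperbolicSolution (n : ℕ) (q : Fin n → ℝ → ℝ × ℝ × ℝ) : Prop :=
  (∀ i t, ldot3 (q i t) (q i t) = -1 ∧ 0 < (q i t).2.2) ∧
  ∀ i t, deriv (deriv (q i)) t =
    (∑ j ∈ Finset.univ.erase i,
      (1 / (ldot3 (q i t) (q j t) ^ 2 - 1) ^ ((3 : ℝ) / 2)) •
        (q j t + ldot3 (q i t) (q j t) • q i t))
    + ldot3 (deriv (q i) t) (deriv (q i) t) • q i t

/-- The regular `n`-gon configuration rotating with angular velocity `Ω` on the circle of
radius `r` at height `z = √(1 + r²)` on the hyperboloid (bodies indexed by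
`i = 0,…,n−1`, corresponding to `i = 1,…,n` in the paper). -/
def polygonH (n : ℕ) (r Ω : ℝ) (i : Fin n) (t : ℝ) : ℝ × ℝ × ℝ :=
  (r * Real.cos (Ω * t + 2 * π * ((i : ℕ) : ℝ) / n),
   r * Real.sin (Ω * t + 2 * π * ((i : ℕ) : ℝ) / n),
   Real.sqrt (1 + r ^ 2))

/-! Every body moves on the horizontal circle of Euclidean radius `r` of the hyperboloid. The
tangential projection `qⱼ + (qᵢ⊙qⱼ) qᵢ` of `qⱼ` at `qᵢ` splits into a multiple of a radial vector
`R(θᵢ)` and a multiple of the circle's tangent `T(θᵢ)`, with coefficients depending only on the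
angle difference `φ = θⱼ − θᵢ`. Summed over the polygon, the tangential parts cancel under
`φ ↦ −φ`, and the radial parts give `−S · R(θᵢ)` with
`S = Σ_{k<n} (1 − cos(2πk/n)) / ((r² cos(2πk/n) − 1 − r²)² − 1)^{3/2}`, while
`q̈ᵢ − (q̇ᵢ⊙q̇ᵢ) qᵢ = −Ω² · R(θᵢ)`. So the equations hold iff `Ω² = S`. For even `n`, the
reflection `k ↦ n − k` pairs off the terms of `S`, leaving the antipodal term `k = n/2`. -/

namespace Function.Periodic

variable {G : ℝ → ℝ}

theorem apply_two_pi_mul_mod_div (hG : Periodic G (2 * π)) (n a : ℕ) :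
    G (2 * π * ((a % n : ℕ) : ℝ) / n) = G (2 * π * a / n) := by
  rcases eq_or_ne n 0 with rfl | hn
  · rw [Nat.mod_zero]
  have hsplit : 2 * π * (a : ℝ) / n = 2 * π * ((a % n : ℕ) : ℝ) / n + (a / n : ℕ) * (2 * π) := by
    conv_lhs => rw [← Nat.mod_add_div a n]
    push_cast
    field_simp
  rw [hsplit, hG.nat_mul]

theorem sum_fin_sub {n : ℕ} (hG : Periodic G (2 * π)) (i : Fin n) :
    ∑ j : Fin n, G (2 * π * (((j : ℕ) : ℝ) - ((i : ℕ) : ℝ)) / n) =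
      ∑ k ∈ Finset.range n, G (2 * π * k / n) := by
  have hn : n ≠ 0 := i.pos.ne'
  have : NeZero n := ⟨hn⟩
  rw [← Fin.sum_univ_eq_sum_range (fun k => G (2 * π * k / n))]
  refine Fintype.sum_equiv (Equiv.subRight i) _ _ fun j => ?_
  have hangle : 2 * π * ((n - i + j : ℕ) : ℝ) / n =
      2 * π * (((j : ℕ) : ℝ) - ((i : ℕ) : ℝ)) / n + 2 * π := by
    rw [Nat.cast_add, Nat.cast_sub i.is_lt.le]
    field_simp [hn]
    ring
  rw [Equiv.subRight_apply, Fin.val_sub, hG.apply_two_pi_mul_mod_div, hangle, hG]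

theorem sum_range_eq_zero_of_odd (hG : Periodic G (2 * π)) (hodd : ∀ x, G (-x) = -G x)
    (n : ℕ) : ∑ k ∈ Finset.range n, G (2 * π * k / n) = 0 := by
  rcases eq_or_ne n 0 with rfl | hn
  · simp
  have : NeZero n := ⟨hn⟩
  have hreflect : ∑ k : Fin n, G (2 * π * k / n) = ∑ k : Fin n, -G (2 * π * k / n) := by
    refine Fintype.sum_equiv (Equiv.neg _) _ _ fun k => ?_
    have hangle : 2 * π * ((n - k : ℕ) : ℝ) / n = -(2 * π * k / n) + 2 * π := by
      rw [Nat.cast_sub k.is_lt.le]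
      field_simp [hn]
      ring
    rw [Equiv.neg_apply, Fin.val_neg', hG.apply_two_pi_mul_mod_div, hangle, hG, hodd, neg_neg]
  rw [← Fin.sum_univ_eq_sum_range (fun k => G (2 * π * k / n))]
  rw [Finset.sum_neg_distrib] at hreflect
  linarith

end Function.Periodic

theorem Finset.sum_range_two_mul_of_symm {g : ℕ → ℝ} {m : ℕ} (hm : m ≠ 0)
    (hg : ∀ k ≤ 2 * m, g (2 * m - k) = g k) :
    ∑ k ∈ range (2 * m), g k = g 0 + 2 * ∑ k ∈ Icc 1 (m - 1), g k + g m := by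
  obtain ⟨p, rfl⟩ := Nat.exists_eq_succ_of_ne_zero hm
  have hupper : ∑ k ∈ range (p + 1), g (p + 1 + k) = ∑ k ∈ range (p + 1), g (k + 1) := by
    rw [← sum_range_reflect]
    refine sum_congr rfl fun k hk => ?_
    rw [← hg (k + 1) (by grind)]
    congr 1
    grind
  have hIcc : ∑ k ∈ Icc 1 p, g k = ∑ k ∈ range p, g (k + 1) := by
    rw [← Ico_add_one_right_eq_Icc, sum_Ico_eq_sum_range]
    simp only [add_comm 1, Nat.add_sub_cancel]
  rw [two_mul, sum_range_add, hupper, sum_range_succ', sum_range_succ, Nat.succ_sub_one, hIcc]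
  ring

namespace HyperbolicPolygon

def circlePoint (r θ : ℝ) : ℝ × ℝ × ℝ := (r * cos θ, r * sin θ, √(1 + r ^ 2))

def circleTangent (r θ : ℝ) : ℝ × ℝ × ℝ := (-(r * sin θ), r * cos θ, 0)

def circleRadial (r θ : ℝ) : ℝ × ℝ × ℝ :=
  ((1 + r ^ 2) * (r * cos θ), (1 + r ^ 2) * (r * sin θ), r ^ 2 * √(1 + r ^ 2))

/-- `((qᵢ⊙qⱼ)² − 1)^{3/2}` for two points of the circle whose angles differ by `φ`, as a
function of `cos φ`. -/
def kernel (r c : ℝ) : ℝ := ((r ^ 2 * c - 1 - r ^ 2) ^ 2 - 1) ^ ((3 : ℝ) / 2)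

def forceSum (n : ℕ) (r : ℝ) : ℝ :=
  ∑ k ∈ Finset.range n, (1 - cos (2 * π * k / n)) / kernel r (cos (2 * π * k / n))

def angle (n : ℕ) (Ω : ℝ) (i : Fin n) (t : ℝ) : ℝ := Ω * t + 2 * π * ((i : ℕ) : ℝ) / n

theorem polygonH_eq_circlePoint (n : ℕ) (r Ω : ℝ) (i : Fin n) :
    polygonH n r Ω i = circlePoint r ∘ angle n Ω i :=
  rfl

theorem angle_eq_add (n : ℕ) (Ω : ℝ) (i j : Fin n) (t : ℝ) :
    angle n Ω j t = angle n Ω i t + 2 * π * (((j : ℕ) : ℝ) - ((i : ℕ) : ℝ)) / n := by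
  simp only [angle]
  ring

theorem ldot3_circlePoint (r θ θ' : ℝ) :
    ldot3 (circlePoint r θ) (circlePoint r θ') = r ^ 2 * cos (θ' - θ) - 1 - r ^ 2 := by
  have hz : √(1 + r ^ 2) ^ 2 = 1 + r ^ 2 := sq_sqrt (by positivity)
  simp only [ldot3, circlePoint, cos_sub]
  linear_combination -hz

theorem ldot3_circlePoint_self (r θ : ℝ) : ldot3 (circlePoint r θ) (circlePoint r θ) = -1 := by
  rw [ldot3_circlePoint, sub_self, cos_zero]
  ring

theorem circlePoint_add_ldot3_smul (r θ φ : ℝ) :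
    circlePoint r (θ + φ) + ldot3 (circlePoint r θ) (circlePoint r (θ + φ)) • circlePoint r θ =
      (cos φ - 1) • circleRadial r θ + sin φ • circleTangent r θ := by
  rw [ldot3_circlePoint, add_sub_cancel_left]
  simp only [circlePoint, circleRadial, circleTangent, cos_add, sin_add, Prod.smul_mk,
    Prod.mk_add_mk, smul_eq_mul, Prod.mk.injEq]
  exact ⟨by ring, by ring, by ring⟩

theorem interaction_circlePoint (r θ φ : ℝ) :
    (1 / (ldot3 (circlePoint r θ) (circlePoint r (θ + φ)) ^ 2 - 1) ^ ((3 : ℝ) / 2)) •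
        (circlePoint r (θ + φ) + ldot3 (circlePoint r θ) (circlePoint r (θ + φ)) • circlePoint r θ)
      = -((1 - cos φ) / kernel r (cos φ)) • circleRadial r θ
        + (sin φ / kernel r (cos φ)) • circleTangent r θ := by
  rw [circlePoint_add_ldot3_smul, ldot3_circlePoint, add_sub_cancel_left, smul_add, smul_smul,
    smul_smul, kernel]
  congr 2 <;> ring

theorem hasDerivAt_circlePoint (r θ : ℝ) :
    HasDerivAt (circlePoint r) (circleTangent r θ) θ :=
  ((hasDerivAt_cos θ).const_mul r).prodMk (((hasDerivAt_sin θ).const_mul r).prodMk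
    (hasDerivAt_const θ √(1 + r ^ 2))) |>.congr_deriv (by simp [circleTangent])

theorem hasDerivAt_circleTangent (r θ : ℝ) :
    HasDerivAt (circleTangent r) (-(r * cos θ), -(r * sin θ), 0) θ :=
  ((hasDerivAt_sin θ).const_mul r).neg.prodMk
    (((hasDerivAt_cos θ).const_mul r).prodMk (hasDerivAt_const θ 0)) |>.congr_deriv (by simp)

theorem hasDerivAt_angle (n : ℕ) (Ω : ℝ) (i : Fin n) (t : ℝ) :
    HasDerivAt (angle n Ω i) Ω t :=
  (((hasDerivAt_id t).const_mul Ω).add_const _).congr_deriv (mul_one Ω)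

theorem deriv_polygonH (n : ℕ) (r Ω : ℝ) (i : Fin n) :
    deriv (polygonH n r Ω i) = fun t => Ω • circleTangent r (angle n Ω i t) :=
  funext fun t => ((hasDerivAt_circlePoint r _).scomp t (hasDerivAt_angle n Ω i t)).deriv

theorem deriv_deriv_polygonH (n : ℕ) (r Ω : ℝ) (i : Fin n) (t : ℝ) :
    deriv (deriv (polygonH n r Ω i)) t =
      -Ω ^ 2 • circleRadial r (angle n Ω i t) +
        ldot3 (deriv (polygonH n r Ω i) t) (deriv (polygonH n r Ω i) t) • polygonH n r Ω i t := by
  have hacc : HasDerivAt (fun s => Ω • circleTangent r (angle n Ω i s))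
      (Ω • Ω • ((-(r * cos (angle n Ω i t)), -(r * sin (angle n Ω i t)), 0) : ℝ × ℝ × ℝ)) t :=
    ((hasDerivAt_circleTangent r _).scomp t (hasDerivAt_angle n Ω i t)).const_smul Ω
  have hspeed : ldot3 (Ω • circleTangent r (angle n Ω i t)) (Ω • circleTangent r (angle n Ω i t))
      = Ω ^ 2 * r ^ 2 := by
    simp only [ldot3, circleTangent, Prod.smul_mk, smul_eq_mul]
    linear_combination (Ω * r) ^ 2 * sin_sq_add_cos_sq (angle n Ω i t)
  rw [deriv_polygonH, hacc.deriv, hspeed]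
  simp only [polygonH_eq_circlePoint, Function.comp_apply, circlePoint, circleRadial,
    Prod.smul_mk, smul_eq_mul, Prod.mk_add_mk, Prod.mk.injEq]
  refine ⟨by ring, by ring, by ring⟩

theorem circleRadial_ne_zero {r : ℝ} (hr : r ≠ 0) (θ : ℝ) : circleRadial r θ ≠ 0 := fun h => by
  have hz : r ^ 2 * √(1 + r ^ 2) ≠ 0 := by positivity
  exact hz (congrArg (fun p => p.2.2) h)

theorem sum_interaction_polygonH {n : ℕ} (r Ω : ℝ) (i : Fin n) (t : ℝ) :
    ∑ j ∈ Finset.univ.erase i,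
        (1 / (ldot3 (polygonH n r Ω i t) (polygonH n r Ω j t) ^ 2 - 1) ^ ((3 : ℝ) / 2)) •
          (polygonH n r Ω j t + ldot3 (polygonH n r Ω i t) (polygonH n r Ω j t) • polygonH n r Ω i t)
      = -forceSum n r • circleRadial r (angle n Ω i t) := by
  set θ := angle n Ω i t
  set φ : Fin n → ℝ := fun j => 2 * π * (((j : ℕ) : ℝ) - ((i : ℕ) : ℝ)) / n
  have hterm : ∀ j, polygonH n r Ω j t = circlePoint r (θ + φ j) := fun j =>
    congrArg (circlePoint r) (angle_eq_add n Ω i j t)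
  have hcos : Function.Periodic (fun x => (1 - cos x) / kernel r (cos x)) (2 * π) := fun x => by
    dsimp only
    rw [cos_add_two_pi]
  have hsin : Function.Periodic (fun x => sin x / kernel r (cos x)) (2 * π) := fun x => by
    dsimp only
    rw [sin_add_two_pi, cos_add_two_pi]
  have hi : polygonH n r Ω i t = circlePoint r θ := rfl
  simp_rw [hi, hterm, interaction_circlePoint]
  rw [Finset.sum_erase _ (by simp [φ]), Finset.sum_add_distrib, ← Finset.sum_smul,
    ← Finset.sum_smul, Finset.sum_neg_distrib, hcos.sum_fin_sub,
    hsin.sum_fin_sub, hsin.sum_range_eq_zero_of_odd (fun x => by simp [neg_div]) n,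
    zero_smul, add_zero]
  rfl

theorem kernel_neg_one {r : ℝ} (hr : 0 ≤ r) :
    kernel r (-1) = 8 * r ^ 3 * (1 + r ^ 2) ^ ((3 : ℝ) / 2) := by
  have hsq : ((2 * r) ^ 2) ^ ((3 : ℝ) / 2) = (2 * r) ^ 3 := by
    rw [← rpow_natCast (2 * r) 2, ← rpow_mul (by positivity), ← rpow_natCast]
    norm_num
  rw [kernel, show (r ^ 2 * -1 - 1 - r ^ 2) ^ 2 - 1 = (2 * r) ^ 2 * (1 + r ^ 2) by ring,
    mul_rpow (by positivity) (by positivity), hsq]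
  ring

theorem forceSum_of_even {n : ℕ} (heven : Even n) (hn : n ≠ 0) {r : ℝ} (hr : 0 ≤ r) :
    forceSum n r = 2 * (∑ j ∈ Finset.Icc 1 (n / 2 - 1),
        (1 - cos (2 * (j : ℝ) * π / n)) /
          ((r ^ 2 * cos (2 * (j : ℝ) * π / n) - 1 - r ^ 2) ^ 2 - 1) ^ ((3 : ℝ) / 2))
        + 1 / (4 * r ^ 3 * (1 + r ^ 2) ^ ((3 : ℝ) / 2)) := by
  obtain ⟨m, rfl⟩ := even_iff_two_dvd.mp heven
  have hm : m ≠ 0 := by omega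
  have hsymm : ∀ k ≤ 2 * m, cos (2 * π * ((2 * m - k : ℕ) : ℝ) / (2 * m : ℕ)) =
      cos (2 * π * k / (2 * m : ℕ)) := fun k hk => by
    rw [Nat.cast_sub hk, ← cos_two_pi_sub]
    congr 1
    field_simp
    push_cast
    ring
  have hantipode : cos (2 * π * m / (2 * m : ℕ)) = -1 := by
    rw [show 2 * π * m / (2 * m : ℕ) = π by push_cast; field_simp, cos_pi]
  rw [forceSum, Finset.sum_range_two_mul_of_symm hm fun k hk => by rw [hsymm k hk],
    Nat.mul_div_cancel_left m two_pos, hantipode, kernel_neg_one hr]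
  simp only [Nat.cast_zero, mul_zero, zero_div, cos_zero, sub_self, kernel]
  simp_rw [mul_right_comm (2 : ℝ) π]
  ring

theorem polygonH_equation_iff {n : ℕ} {r : ℝ} (hr : r ≠ 0) (Ω : ℝ) (i : Fin n) (t : ℝ) :
    deriv (deriv (polygonH n r Ω i)) t =
        (∑ j ∈ Finset.univ.erase i,
          (1 / (ldot3 (polygonH n r Ω i t) (polygonH n r Ω j t) ^ 2 - 1) ^ ((3 : ℝ) / 2)) •
            (polygonH n r Ω j t + ldot3 (polygonH n r Ω i t) (polygonH n r Ω j t) • polygonH n r Ω i t))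
        + ldot3 (deriv (polygonH n r Ω i) t) (deriv (polygonH n r Ω i) t) • polygonH n r Ω i t ↔
      Ω ^ 2 = forceSum n r := by
  rw [deriv_deriv_polygonH, sum_interaction_polygonH, add_left_inj,
    (smul_left_injective ℝ (circleRadial_ne_zero hr _)).eq_iff, neg_inj]

theorem isHyperbolicSolution_polygonH_iff {n : ℕ} [NeZero n] {r : ℝ} (hr : r ≠ 0) (Ω : ℝ) :
    IsHyperbolicSolution n (polygonH n r Ω) ↔ Ω ^ 2 = forceSum n r := by
  have hupper : ∀ i t, ldot3 (polygonH n r Ω i t) (polygonH n r Ω i t) = -1 ∧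
      0 < (polygonH n r Ω i t).2.2 := fun _ _ =>
    ⟨ldot3_circlePoint_self r _, sqrt_pos.2 (by positivity)⟩
  simp only [IsHyperbolicSolution, polygonH_equation_iff hr]
  exact ⟨fun h => h.2 0 0, fun h => ⟨hupper, fun _ _ => h⟩⟩

end HyperbolicPolygon

/-- For even `n ≥ 2` and `r > 0`, the rotating regular `n`-gon at height `z = √(1 + r²)`
on `H²` is a solution of the curved `n`-body equations if and only if
`Ω² = 2 Σ_{j=1}^{n/2−1} (1 − cos(2jπ/n)) / ((r² cos(2jπ/n) − 1 − r²)² − 1)^{3/2}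
      + 1/(4 r³ (1 + r²)^{3/2})`. -/
theorem polygon_relative_equilibrium_iff_hyperbolic_even
    (n : ℕ) (hn : 2 ≤ n) (heven : Even n) (r : ℝ) (hr0 : 0 < r) (Ω : ℝ) :
    IsHyperbolicSolution n (polygonH n r Ω) ↔
      Ω ^ 2 = 2 * (∑ j ∈ Finset.Icc 1 (n / 2 - 1),
        (1 - Real.cos (2 * (j : ℝ) * π / n)) /
          ((r ^ 2 * Real.cos (2 * (j : ℝ) * π / n) - 1 - r ^ 2) ^ 2 - 1) ^ ((3 : ℝ) / 2))
        + 1 / (4 * r ^ 3 * (1 + r ^ 2) ^ ((3 : ℝ) / 2)) := by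
  have : NeZero n := ⟨by omega⟩
  rw [HyperbolicPolygon.isHyperbolicSolution_polygonH_iff hr0.ne',
    HyperbolicPolygon.forceSum_of_even heven (by omega) hr0.le]
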